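/- arXiv:nlin/0409003 — 7 statements merged into one kernel-verified Lean document; each statement's English description precedes it below -/
import Mathlib

section
/- Let y_m > 0 and let f : ℝ → ℝ be continuous and strictly positive on [0, y_m]. Set F(y) = ∫₀^y f(s) ds and h(y) = F(y_m) − F(y). Define g : [0, y_m) → ℝ by g(y) = ∫₀^y h(s)^{-3/2} ds (so g(0) = 0 and g'(y) = h(y)^{-3/2} > 0). Then the variational functional attains the value λ[y_m]: (1/2)·(∫₀^{y_m} g'(y)^{1/3} dy)³ / (∫₀^{y_m} f(y) g(y) dy) = (1/2)·(∫₀^{y_m} h(s)^{-1/2} ds)². -/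
/-!
Since `g' = h^{-3/2}` and `h(s) = ∫_s^{y_m} f`, exchanging the order of integration over the
triangle `0 ≤ s ≤ y ≤ y_m` gives `∫ f g = ∫ h^{-3/2} h = ∫ h^{-1/2} =: I`, while
`(g')^{1/3} = h^{-1/2}`; the quotient is therefore `I³ / (2 I) = I² / 2`.
-/

open MeasureTheory intervalIntegral Set
open scoped ENNReal

theorem lintegral_mul_setLIntegral_Iic_eq {α : Type*} [MeasurableSpace α] [LinearOrder α]
    [TopologicalSpace α] [OrderClosedTopology α] [SecondCountableTopology α]
    [OpensMeasurableSpace α] {μ : Measure α} [SFinite μ] {f ψ : α → ℝ≥0∞}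
    (hf : AEMeasurable f μ) (hψ : AEMeasurable ψ μ) :
    ∫⁻ y, f y * ∫⁻ s in Iic y, ψ s ∂μ ∂μ = ∫⁻ s, ψ s * ∫⁻ y in Ici s, f y ∂μ ∂μ := by
  have hmeas : AEMeasurable
      (Function.uncurry fun y s => f y * (Iic y).indicator ψ s) (μ.prod μ) :=
    hf.comp_fst.mul ((hψ.comp_snd).indicator (measurableSet_le measurable_snd measurable_fst))
  calc ∫⁻ y, f y * ∫⁻ s in Iic y, ψ s ∂μ ∂μ
      = ∫⁻ y, ∫⁻ s, f y * (Iic y).indicator ψ s ∂μ ∂μ := by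
        refine lintegral_congr fun y => ?_
        rw [lintegral_const_mul'' _ (hψ.indicator measurableSet_Iic),
          lintegral_indicator measurableSet_Iic]
    _ = ∫⁻ s, ∫⁻ y, f y * (Iic y).indicator ψ s ∂μ ∂μ := lintegral_lintegral_swap hmeas
    _ = ∫⁻ s, ∫⁻ y, ψ s * (Ici s).indicator f y ∂μ ∂μ := by
        refine lintegral_congr fun s => lintegral_congr fun y => ?_
        by_cases hsy : s ≤ y
        · simp [hsy, mul_comm]
        · simp [hsy]
    _ = ∫⁻ s, ψ s * ∫⁻ y in Ici s, f y ∂μ ∂μ := by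
        refine lintegral_congr fun s => ?_
        rw [lintegral_const_mul'' _ (hf.indicator measurableSet_Ici),
          lintegral_indicator measurableSet_Ici]

theorem setLIntegral_Ioc_mul_setLIntegral_Ioc_eq {α : Type*} [MeasurableSpace α]
    [LinearOrder α] [TopologicalSpace α] [OrderClosedTopology α] [SecondCountableTopology α]
    [OpensMeasurableSpace α] {μ : Measure α} [SFinite μ] {f ψ : α → ℝ≥0∞} {a b : α}
    (hf : AEMeasurable f (μ.restrict (Ioc a b))) (hψ : AEMeasurable ψ (μ.restrict (Ioc a b))) :
    ∫⁻ y in Ioc a b, f y * ∫⁻ s in Ioc a y, ψ s ∂μ ∂μ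
      = ∫⁻ s in Ioc a b, ψ s * ∫⁻ y in Icc s b, f y ∂μ ∂μ := by
  have key := lintegral_mul_setLIntegral_Iic_eq hf hψ
  simp only [Measure.restrict_restrict measurableSet_Iic,
    Measure.restrict_restrict measurableSet_Ici] at key
  convert key using 1
  · refine setLIntegral_congr_fun measurableSet_Ioc fun y hy => ?_
    rw [Iic_inter_Ioc_of_le hy.2]
  · refine setLIntegral_congr_fun measurableSet_Ioc fun s hs => ?_
    congr 3
    ext y
    simp only [mem_Icc, mem_inter_iff, mem_Ici, mem_Ioc]
    exact ⟨fun ⟨hsy, hyb⟩ => ⟨hsy, hs.1.trans_le hsy, hyb⟩, fun ⟨hsy, _, hyb⟩ => ⟨hsy, hyb⟩⟩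

theorem continuousOn_integral_tail {a b : ℝ} (hab : a ≤ b) {f : ℝ → ℝ}
    (hf : ContinuousOn f (Icc a b)) : ContinuousOn (fun s => ∫ y in s..b, f y) (Icc a b) := by
  have := continuousOn_primitive_interval_left (μ := volume)
    (by rw [uIcc_of_le hab]; exact hf.integrableOn_Icc)
  rwa [uIcc_of_le hab] at this

theorem integral_tail_pos {a b s : ℝ} {f : ℝ → ℝ} (hf : ContinuousOn f (Icc a b))
    (hf_pos : ∀ y ∈ Icc a b, 0 < f y) (hs : s ∈ Ico a b) : 0 < ∫ y in s..b, f y :=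
  intervalIntegral_pos_of_pos_on
    (hf.mono (by rw [uIcc_of_le hs.2.le]; exact Icc_subset_Icc_left hs.1)).intervalIntegrable
    (fun y hy => hf_pos y ⟨hs.1.trans hy.1.le, hy.2.le⟩) hs.2

theorem ContinuousOn.intervalIntegrable_of_mem_Ico {a b y : ℝ} {φ : ℝ → ℝ}
    (hφ : ContinuousOn φ (Ico a b)) (hy : y ∈ Ico a b) : IntervalIntegrable φ volume a y :=
  (hφ.mono (by rw [uIcc_of_le hy.1]; exact Icc_subset_Ico_right hy.2)).intervalIntegrable

theorem monotoneOn_primitive_of_nonneg {a b : ℝ} {φ : ℝ → ℝ} (hφ : ContinuousOn φ (Ico a b))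
    (hφ0 : ∀ s ∈ Ico a b, 0 ≤ φ s) : MonotoneOn (fun y => ∫ s in a..y, φ s) (Ico a b) :=
  fun y₁ hy₁ y₂ hy₂ hle => by
    refine integral_mono_interval le_rfl hy₁.1 hle ?_ (hφ.intervalIntegrable_of_mem_Ico hy₂)
    filter_upwards [ae_restrict_mem measurableSet_Ioc] with s hs
    exact hφ0 s ⟨hs.1.le, hs.2.trans_lt hy₂.2⟩

theorem setLIntegral_ofReal_mul_primitive_eq {a b : ℝ} {f φ : ℝ → ℝ}
    (hf : ContinuousOn f (Icc a b)) (hf0 : ∀ y ∈ Icc a b, 0 ≤ f y)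
    (hφ : ContinuousOn φ (Ico a b)) (hφ0 : ∀ s ∈ Ico a b, 0 ≤ φ s) :
    ∫⁻ y in Ioo a b, ENNReal.ofReal (f y * ∫ s in a..y, φ s)
      = ∫⁻ s in Ioo a b, ENNReal.ofReal (φ s * ∫ y in s..b, f y) := by
  have hIoo : volume.restrict (Ioc a b) = volume.restrict (Ioo a b) :=
    (Measure.restrict_congr_set Ioo_ae_eq_Ioc).symm
  have hprimitive : ∀ y ∈ Ico a b,
      ENNReal.ofReal (∫ s in a..y, φ s) = ∫⁻ s in Ioc a y, ENNReal.ofReal (φ s) := by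
    intro y hy
    rw [integral_of_le hy.1, ofReal_integral_eq_lintegral_ofReal
      (hφ.intervalIntegrable_of_mem_Ico hy).1]
    filter_upwards [ae_restrict_mem measurableSet_Ioc] with s hs
    exact hφ0 s ⟨hs.1.le, hs.2.trans_lt hy.2⟩
  have htail : ∀ s ∈ Icc a b,
      ENNReal.ofReal (∫ y in s..b, f y) = ∫⁻ y in Icc s b, ENNReal.ofReal (f y) := by
    intro s hs
    rw [integral_of_le hs.2, ← integral_Icc_eq_integral_Ioc, ofReal_integral_eq_lintegral_ofReal
      (hf.mono (Icc_subset_Icc_left hs.1)).integrableOn_Icc]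
    filter_upwards [ae_restrict_mem measurableSet_Icc] with y hy
    exact hf0 y ⟨hs.1.trans hy.1, hy.2⟩
  calc ∫⁻ y in Ioo a b, ENNReal.ofReal (f y * ∫ s in a..y, φ s)
      = ∫⁻ y in Ioo a b, ENNReal.ofReal (f y) * ∫⁻ s in Ioc a y, ENNReal.ofReal (φ s) :=
        setLIntegral_congr_fun measurableSet_Ioo fun y hy => by
          rw [ENNReal.ofReal_mul (hf0 y (Ioo_subset_Icc_self hy)),
            hprimitive y (Ioo_subset_Ico_self hy)]
    _ = ∫⁻ s in Ioo a b, ENNReal.ofReal (φ s) * ∫⁻ y in Icc s b, ENNReal.ofReal (f y) := by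
        simp only [← hIoo]
        refine setLIntegral_Ioc_mul_setLIntegral_Ioc_eq ?_ ?_
        · exact ((hf.mono Ioc_subset_Icc_self).aemeasurable measurableSet_Ioc).ennreal_ofReal
        · rw [hIoo]
          exact ((hφ.mono Ioo_subset_Ico_self).aemeasurable measurableSet_Ioo).ennreal_ofReal
    _ = ∫⁻ s in Ioo a b, ENNReal.ofReal (φ s * ∫ y in s..b, f y) :=
        setLIntegral_congr_fun measurableSet_Ioo fun s hs => by
          rw [ENNReal.ofReal_mul (hφ0 s (Ioo_subset_Ico_self hs)),
            htail s (Ioo_subset_Icc_self hs)]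

/-- `φ` need not be integrable on `[a, b]` (in the application it blows up at `b`), so the order
of integration is exchanged in `ℝ≥0∞`; both sides are `toReal` of the same, possibly infinite,
lower integral. -/
theorem integral_mul_primitive_eq_integral_mul_tail {a b : ℝ} (hab : a ≤ b) {f φ : ℝ → ℝ}
    (hf : ContinuousOn f (Icc a b)) (hf0 : ∀ y ∈ Icc a b, 0 ≤ f y)
    (hφ : ContinuousOn φ (Ico a b)) (hφ0 : ∀ s ∈ Ico a b, 0 ≤ φ s) :
    ∫ y in a..b, f y * (∫ s in a..y, φ s) = ∫ s in a..b, φ s * ∫ y in s..b, f y := by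
  have hprimitive_meas : AEMeasurable (fun y => ∫ s in a..y, φ s) (volume.restrict (Ioo a b)) :=
    aemeasurable_restrict_of_monotoneOn measurableSet_Ioo
      ((monotoneOn_primitive_of_nonneg hφ hφ0).mono Ioo_subset_Ico_self)
  have htail_cont : ContinuousOn (fun s => ∫ y in s..b, f y) (Ioo a b) :=
    (continuousOn_integral_tail hab hf).mono Ioo_subset_Icc_self
  have hlhs : ∫ y in Ioo a b, f y * (∫ s in a..y, φ s)
      = (∫⁻ y in Ioo a b, ENNReal.ofReal (f y * ∫ s in a..y, φ s)).toReal := by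
    refine integral_eq_lintegral_of_nonneg_ae ?_ (((hf.mono Ioo_subset_Icc_self).aemeasurable
      measurableSet_Ioo).mul hprimitive_meas).aestronglyMeasurable
    filter_upwards [ae_restrict_mem measurableSet_Ioo] with y hy
    exact mul_nonneg (hf0 y (Ioo_subset_Icc_self hy)) (integral_nonneg hy.1.le fun s hs =>
      hφ0 s ⟨hs.1, hs.2.trans_lt hy.2⟩)
  have hrhs : ∫ s in Ioo a b, φ s * (∫ y in s..b, f y)
      = (∫⁻ s in Ioo a b, ENNReal.ofReal (φ s * ∫ y in s..b, f y)).toReal := by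
    refine integral_eq_lintegral_of_nonneg_ae ?_
      (((hφ.mono Ioo_subset_Ico_self).mul htail_cont).aestronglyMeasurable measurableSet_Ioo)
    filter_upwards [ae_restrict_mem measurableSet_Ioo] with s hs
    exact mul_nonneg (hφ0 s (Ioo_subset_Ico_self hs)) (integral_nonneg hs.2.le fun y hy =>
      hf0 y ⟨hs.1.le.trans hy.1, hy.2⟩)
  rw [integral_of_le hab, integral_of_le hab, ← Measure.restrict_congr_set Ioo_ae_eq_Ioc, hlhs,
    hrhs, setLIntegral_ofReal_mul_primitive_eq hf hf0 hφ hφ0]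

theorem integral_mul_primitive_rpow_tail_eq {a b r : ℝ} (hab : a ≤ b) {f H : ℝ → ℝ}
    (hf : ContinuousOn f (Icc a b)) (hf_pos : ∀ y ∈ Icc a b, 0 < f y)
    (hH : ∀ s ∈ Icc a b, H s = ∫ y in s..b, f y) (hr : r + 1 ≠ 0) :
    ∫ y in a..b, f y * (∫ s in a..y, H s ^ r) = ∫ s in a..b, H s ^ (r + 1) := by
  have hH_pos : ∀ s ∈ Ico a b, 0 < H s := fun s hs =>
    (hH s (Ico_subset_Icc_self hs)).symm ▸ integral_tail_pos hf hf_pos hs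
  have hHr_cont : ContinuousOn (fun s => H s ^ r) (Ico a b) :=
    (((continuousOn_integral_tail hab hf).congr hH).mono Ico_subset_Icc_self).rpow_const
      fun s hs => Or.inl (hH_pos s hs).ne'
  rw [integral_mul_primitive_eq_integral_mul_tail hab hf (fun y hy => (hf_pos y hy).le)
    hHr_cont fun s hs => Real.rpow_nonneg (hH_pos s hs).le _]
  refine integral_congr fun s hs => ?_
  rw [uIcc_of_le hab] at hs
  rw [← hH s hs, Real.rpow_add_one' (hH s hs ▸ integral_nonneg hs.2 fun y hy =>
    (hf_pos y ⟨hs.1.trans hy.1, hy.2⟩).le) hr]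

/-- Attainment part of Theorem 1: the maximizing `g`, with
`g(0) = 0` and `g'(y) = h(y)^{-3/2}`, attains the value
`λ[y_m] = (1/2)(∫₀^{y_m} h^{-1/2})²` in the variational principle (2.5). -/
theorem stmt_1 (y_m : ℝ) (hym : 0 < y_m) (f : ℝ → ℝ)
    (hf_cont : ContinuousOn f (Set.Icc 0 y_m))
    (hf_pos : ∀ y ∈ Set.Icc 0 y_m, 0 < f y)
    (F h g : ℝ → ℝ)
    (hF : ∀ y, F y = ∫ s in (0:ℝ)..y, f s)
    (hh : ∀ y, h y = F y_m - F y)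
    (hg : ∀ y ∈ Set.Ico 0 y_m, g y = ∫ s in (0:ℝ)..y, (h s) ^ (-(3/2) : ℝ)) :
    (1/2) * (∫ y in (0:ℝ)..y_m, ((h y) ^ (-(3/2) : ℝ)) ^ ((1:ℝ)/3)) ^ 3
        / (∫ y in (0:ℝ)..y_m, f y * g y)
      = (1/2) * (∫ s in (0:ℝ)..y_m, (h s) ^ (-(1/2) : ℝ)) ^ 2 := by
  have htail : ∀ s ∈ Icc 0 y_m, h s = ∫ y in s..y_m, f y := fun s hs => by
    have hint : ∀ t ∈ Icc 0 y_m, IntervalIntegrable f volume 0 t := fun t ht =>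
      (hf_cont.mono (by rw [uIcc_of_le ht.1]; exact Icc_subset_Icc_right ht.2)).intervalIntegrable
    rw [hh, hF, hF, integral_interval_sub_left (hint y_m ⟨hym.le, le_rfl⟩) (hint s hs)]
  have hnum : ∫ y in (0:ℝ)..y_m, ((h y) ^ (-(3/2) : ℝ)) ^ ((1:ℝ)/3)
      = ∫ s in (0:ℝ)..y_m, (h s) ^ (-(1/2) : ℝ) := integral_congr fun y hy => by
    rw [uIcc_of_le hym.le] at hy
    rw [← Real.rpow_mul (htail y hy ▸ integral_nonneg hy.2 fun s hs =>
      (hf_pos s ⟨hy.1.trans hs.1, hs.2⟩).le)]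
    norm_num
  have hden : ∫ y in (0:ℝ)..y_m, f y * g y = ∫ s in (0:ℝ)..y_m, (h s) ^ (-(1/2) : ℝ) := calc
    ∫ y in (0:ℝ)..y_m, f y * g y
        = ∫ y in (0:ℝ)..y_m, f y * ∫ s in (0:ℝ)..y, (h s) ^ (-(3/2) : ℝ) := by
      refine integral_congr_ae ?_
      filter_upwards [measure_eq_zero_iff_ae_notMem.1 (measure_singleton y_m)] with y hy hyI
      rw [uIoc_of_le hym.le] at hyI
      rw [hg y ⟨hyI.1.le, lt_of_le_of_ne hyI.2 hy⟩]
    _ = ∫ s in (0:ℝ)..y_m, (h s) ^ (-(3/2) + 1 : ℝ) :=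
      integral_mul_primitive_rpow_tail_eq hym.le hf_cont hf_pos htail (by norm_num)
    _ = ∫ s in (0:ℝ)..y_m, (h s) ^ (-(1/2) : ℝ) := by norm_num
  rw [hnum, hden]
  generalize ∫ s in (0:ℝ)..y_m, (h s) ^ (-(1/2) : ℝ) = I
  rcases eq_or_ne I 0 with rfl | hI
  · simp
  · field_simp
end

section
/- Let y_m > 0, λ > 0, and let f : ℝ → ℝ be continuous and strictly positive on [0, y_m]. Suppose y : [0,1] → ℝ is twice continuously differentiable with −y''(x) = λ f(y(x)) on [0,1], y'(0) = 0, y(1) = 0, y(0) = y_m, and y(x) ≥ 0 on [0,1]. Set F(y) = ∫₀^y f(s) ds and h(s) = F(y_m) − F(s). Then λ = (1/2)·(∫₀^{y_m} h(s)^{-1/2} ds)². -/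
open MeasureTheory intervalIntegral Set

/-!
Since `f > 0` on `[0, y_m]`, `y'' < 0` wherever `y ≤ y_m`, and a first-point argument shows that
`y'' < 0` on all of `[0, 1]`; with `y'(0) = 0`, `y` then decreases strictly from `y_m` to `0`.
Multiplying the equation by `y'` gives conservation of energy, `y'(x)² = 2λ h(y(x))`, so the
substitution `s = y(x)` turns `∫₀^{y_m} h^{-1/2}` into `∫₀¹ |y'| h(y)^{-1/2} = ∫₀¹ √(2λ) = √(2λ)`.
-/

theorem strictAntiOn_Icc_of_hasDerivAt_neg {a b : ℝ} {f f' : ℝ → ℝ}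
    (hf : ∀ x ∈ Icc a b, HasDerivAt f (f' x) x) (hneg : ∀ x ∈ Ioo a b, f' x < 0) :
    StrictAntiOn f (Icc a b) := by
  refine strictAntiOn_of_deriv_neg (convex_Icc a b)
    (fun x hx => (hf x hx).continuousAt.continuousWithinAt) fun x hx => ?_
  rw [interior_Icc] at hx
  rw [(hf x (Ioo_subset_Icc_self hx)).deriv]
  exact hneg x hx

theorem deriv_neg_of_deriv2_neg {a b : ℝ} {y' y'' : ℝ → ℝ}
    (hy'' : ∀ x ∈ Icc a b, HasDerivAt y' (y'' x) x) (ha : y' a ≤ 0)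
    (hneg : ∀ x ∈ Ioo a b, y'' x < 0) : ∀ x ∈ Ioc a b, y' x < 0 := fun _ hx =>
  (strictAntiOn_Icc_of_hasDerivAt_neg hy'' hneg (left_mem_Icc.2 (hx.1.le.trans hx.2))
    (Ioc_subset_Icc_self hx) hx.1).trans_le ha

theorem strictAntiOn_of_deriv2_neg {a b : ℝ} {y y' y'' : ℝ → ℝ}
    (hy' : ∀ x ∈ Icc a b, HasDerivAt y (y' x) x) (hy'' : ∀ x ∈ Icc a b, HasDerivAt y' (y'' x) x)
    (ha : y' a ≤ 0) (hneg : ∀ x ∈ Ioo a b, y'' x < 0) : StrictAntiOn y (Icc a b) :=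
  strictAntiOn_Icc_of_hasDerivAt_neg hy' fun x hx =>
    deriv_neg_of_deriv2_neg hy'' ha hneg x (Ioo_subset_Ioc_self hx)

-- At the first point `c` with `y'' c ≥ 0`, `y` has strictly decreased on `[a, c]`.
theorem deriv2_neg_of_neg_on_sublevel {a b : ℝ} {y y' y'' : ℝ → ℝ}
    (hy' : ∀ x ∈ Icc a b, HasDerivAt y (y' x) x) (hy'' : ∀ x ∈ Icc a b, HasDerivAt y' (y'' x) x)
    (hy''_cont : ContinuousOn y'' (Icc a b)) (ha : y' a ≤ 0)
    (hneg : ∀ x ∈ Icc a b, y x ≤ y a → y'' x < 0) : ∀ x ∈ Icc a b, y'' x < 0 := by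
  by_contra! hbad
  obtain ⟨x₀, hx₀⟩ := hbad
  set S := Icc a b ∩ y'' ⁻¹' Ici 0
  have hS : IsCompact S := isCompact_Icc.of_isClosed_subset
    (hy''_cont.preimage_isClosed_of_isClosed isClosed_Icc isClosed_Ici) inter_subset_left
  obtain ⟨c, ⟨hc, hc0⟩, hc_least⟩ := hS.exists_isLeast ⟨x₀, hx₀⟩
  have hac : a < c := hc.1.lt_of_ne fun hac => (hneg a (hac ▸ hc) le_rfl).not_ge (hac ▸ hc0)
  have hsub : Icc a c ⊆ Icc a b := Icc_subset_Icc_right hc.2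
  have hbefore : ∀ x ∈ Ioo a c, y'' x < 0 := fun x hx => not_le.1 fun h0 =>
    (hc_least ⟨hsub (Ioo_subset_Icc_self hx), h0⟩).not_gt hx.2
  have hyc : y c < y a := strictAntiOn_of_deriv2_neg (fun x hx => hy' x (hsub hx))
    (fun x hx => hy'' x (hsub hx)) ha hbefore (left_mem_Icc.2 hac.le) (right_mem_Icc.2 hac.le) hac
  exact (hneg c hc hyc.le).not_ge hc0

theorem energy_conservation {a b lam : ℝ} {y y' y'' G g : ℝ → ℝ}
    (hy' : ∀ x ∈ Icc a b, HasDerivAt y (y' x) x) (hy'' : ∀ x ∈ Icc a b, HasDerivAt y' (y'' x) x)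
    (hG : ∀ x ∈ Icc a b, HasDerivAt G (g (y x)) (y x))
    (hode : ∀ x ∈ Icc a b, -y'' x = lam * g (y x)) :
    ∀ x ∈ Icc a b, y' x ^ 2 + 2 * lam * G (y x) = y' a ^ 2 + 2 * lam * G (y a) := by
  have hE : ∀ x ∈ Icc a b,
      HasDerivAt (fun t => y' t ^ 2 + 2 * lam * G (y t)) 0 x := fun x hx => by
    refine (((hy'' x hx).pow 2).add
      (((hG x hx).comp x (hy' x hx)).const_mul (2 * lam))).congr_deriv ?_
    norm_num
    linear_combination (-2 * y' x) * hode x hx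
  exact constant_of_has_deriv_right_zero
    (fun x hx => (hE x hx).continuousAt.continuousWithinAt)
    fun x hx => (hE x (Ico_subset_Icc_self hx)).hasDerivWithinAt

theorem exists_hasDerivAt_eq_integral_of_continuousOn {a b : ℝ} (hab : a ≤ b) {f : ℝ → ℝ}
    (hf : ContinuousOn f (Icc a b)) :
    ∃ G : ℝ → ℝ, (∀ s ∈ Icc a b, HasDerivAt G (f s) s) ∧
      ∀ s ∈ Icc a b, G s = ∫ r in a..s, f r := by
  set f₀ := IccExtend hab ((Icc a b).domRestrict f)
  have hf₀ : Continuous f₀ := hf.domRestrict.Icc_extend'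
  have hf₀_eq : ∀ s ∈ Icc a b, f₀ s = f s := fun s hs => IccExtend_of_mem hab _ hs
  refine ⟨fun s => ∫ r in a..s, f₀ r, fun s hs => ?_, fun s hs => ?_⟩
  · rw [← hf₀_eq s hs]
    exact hf₀.integral_hasStrictDerivAt a s |>.hasDerivAt
  · refine integral_congr fun r hr => hf₀_eq r ?_
    rw [uIcc_of_le hs.1] at hr
    exact ⟨hr.1, hr.2.trans hs.2⟩

theorem mul_rpow_neg_half_eq_sqrt {v k H : ℝ} (hv : 0 < v) (hk : 0 < k) (h : v ^ 2 = k * H) :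
    v * H ^ (-(1 / 2) : ℝ) = √k := by
  have hH : H = (v / √k) ^ 2 := by
    rw [div_pow, Real.sq_sqrt hk.le, h]; field_simp
  rw [hH, Real.rpow_neg (sq_nonneg _), ← Real.sqrt_eq_rpow, Real.sqrt_sq (by positivity)]
  field_simp

theorem integral_Icc_rpow_neg_half_eq_of_sq_deriv {a b k : ℝ} {y y' H : ℝ → ℝ} (hab : a ≤ b)
    (hk : 0 < k) (hy : ContinuousOn y (Icc a b)) (hy' : ∀ x ∈ Ioo a b, HasDerivAt y (y' x) x)
    (hneg : ∀ x ∈ Ioo a b, y' x < 0) (henergy : ∀ x ∈ Ioo a b, y' x ^ 2 = k * H (y x)) :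
    ∫ s in Icc (y b) (y a), H s ^ (-(1 / 2) : ℝ) = √k * (b - a) := by
  rw [← neg_neg (∫ s in Icc (y b) (y a), _), ← integral_Icc_deriv_smul_of_deriv_nonpos hy hy'
    (fun x hx => (hneg x hx).le) hab, integral_Icc_eq_integral_Ioo, ← MeasureTheory.integral_neg,
    setIntegral_congr_fun measurableSet_Ioo (g := fun _ => √k), setIntegral_const,
    Real.volume_real_Ioo_of_le hab, smul_eq_mul, mul_comm]
  intro x hx
  simp only [smul_eq_mul, ← neg_mul]
  exact mul_rpow_neg_half_eq_sqrt (neg_pos.2 (hneg x hx)) hk (by rw [neg_sq]; exact henergy x hx)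

/-- Remark after Theorem 1 (equation (2.7)): for the principal solution
`(λ, y)` of `−y'' = λ f(y)`, `y'(0) = 0`, `y(1) = 0`, `y(0) = y_m`, the
eigenvalue is given exactly by the quadrature
`λ = (1/2)(∫₀^{y_m} h^{-1/2})²`. -/
theorem stmt_3 (y_m lam : ℝ) (hym : 0 < y_m) (hlam : 0 < lam)
    (f : ℝ → ℝ)
    (hf_cont : ContinuousOn f (Set.Icc 0 y_m))
    (hf_pos : ∀ s ∈ Set.Icc 0 y_m, 0 < f s)
    (y y' y'' : ℝ → ℝ)
    (hy' : ∀ x ∈ Set.Icc (0:ℝ) 1, HasDerivAt y (y' x) x)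
    (hy'' : ∀ x ∈ Set.Icc (0:ℝ) 1, HasDerivAt y' (y'' x) x)
    (hy''_cont : ContinuousOn y'' (Set.Icc 0 1))
    (hode : ∀ x ∈ Set.Icc (0:ℝ) 1, -y'' x = lam * f (y x))
    (hbc0 : y' 0 = 0) (hbc1 : y 1 = 0) (hinit : y 0 = y_m)
    (hpos : ∀ x ∈ Set.Icc (0:ℝ) 1, 0 ≤ y x)
    (F h : ℝ → ℝ)
    (hF : ∀ s, F s = ∫ r in (0:ℝ)..s, f r)
    (hh : ∀ s, h s = F y_m - F s) :
    lam = (1/2) * (∫ s in (0:ℝ)..y_m, (h s) ^ (-(1/2) : ℝ)) ^ 2 := by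
  obtain ⟨G, hG, hG_eq⟩ := exists_hasDerivAt_eq_integral_of_continuousOn hym.le hf_cont
  have hh_eq : ∀ s ∈ Icc 0 y_m, h s = G y_m - G s := fun s hs => by
    rw [hh, hF, hF, hG_eq s hs, hG_eq y_m (right_mem_Icc.2 hym.le)]
  have hy''_neg : ∀ x ∈ Icc (0:ℝ) 1, y'' x < 0 :=
    deriv2_neg_of_neg_on_sublevel hy' hy'' hy''_cont hbc0.le fun x hx hyx => by
      nlinarith [hode x hx, hf_pos (y x) ⟨hpos x hx, hinit ▸ hyx⟩]
  have hy''_neg_Ioo : ∀ x ∈ Ioo (0:ℝ) 1, y'' x < 0 := fun x hx => hy''_neg x (Ioo_subset_Icc_self hx)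
  have hy_mem : ∀ x ∈ Icc (0:ℝ) 1, y x ∈ Icc 0 y_m := fun x hx =>
    ⟨hpos x hx, hinit ▸ (strictAntiOn_of_deriv2_neg hy' hy'' hbc0.le hy''_neg_Ioo).antitoneOn
      (left_mem_Icc.2 zero_le_one) hx hx.1⟩
  have henergy : ∀ x ∈ Icc (0:ℝ) 1, y' x ^ 2 = 2 * lam * h (y x) := fun x hx => by
    have := energy_conservation hy' hy'' (fun x hx => hG (y x) (hy_mem x hx)) hode x hx
    rw [hbc0, hinit] at this
    rw [hh_eq _ (hy_mem x hx)]
    linear_combination this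
  have hquad := integral_Icc_rpow_neg_half_eq_of_sq_deriv zero_le_one (by positivity)
    (fun x hx => (hy' x hx).continuousAt.continuousWithinAt)
    (fun x hx => hy' x (Ioo_subset_Icc_self hx))
    (fun x hx => deriv_neg_of_deriv2_neg hy'' hbc0.le hy''_neg_Ioo x (Ioo_subset_Ioc_self hx))
    (fun x hx => henergy x (Ioo_subset_Icc_self hx))
  rw [hbc1, hinit, sub_zero, mul_one, integral_Icc_eq_integral_Ioc,
    ← intervalIntegral.integral_of_le hym.le] at hquad
  rw [hquad, Real.sq_sqrt (by positivity)]
  ring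
end

section
/- Let y_m > 0 and let f : ℝ → ℝ be continuous and strictly positive on [0, y_m]. Set F(y) = ∫₀^y f(s) ds and h(y) = F(y_m) − F(y). Then for every continuous q : (0, y_m) → ℝ with q > 0, ∫₀^{y_m} q(s) ds = 1, and ∫₀^{y_m} h(s) q(s)³ ds < ∞, one has ∫₀^{y_m} h(s) q(s)³ ds ≥ (∫₀^{y_m} h(s)^{-1/2} ds)^{-2}. -/
open MeasureTheory intervalIntegral Set

/-! Tangent-line argument, with `r = w^{-1/2}` and `B = ∫ r`: the minimiser is `q* = r / B`, and
convexity of `x ↦ x³` at `q*` gives `w q³ ≥ 3 q / B² - 2 r / B³` pointwise. Integrating, and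
using `∫ q = 1`, yields `∫ w q³ ≥ 3 / B² - 2 / B² = 1 / B²`. If `r` is not integrable, then
`B = 0` by convention and the bound reads `0 ≤ ∫ w q³`. -/

lemma three_mul_sq_mul_sub_le_mul_pow_three {w q c : ℝ} (hw : 0 < w) (hq : 0 ≤ q) (hc : 0 ≤ c) :
    3 * c ^ 2 * q - 2 * c ^ 3 * w ^ (-(1 / 2) : ℝ) ≤ w * q ^ 3 := by
  set r := w ^ (-(1 / 2) : ℝ)
  have hr : 0 ≤ r := Real.rpow_nonneg hw.le _
  have hwr : w * r ^ 2 = 1 := by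
    rw [← Real.rpow_natCast, ← Real.rpow_mul hw.le]
    norm_num [Real.rpow_neg_one, hw.ne']
  have hfactor : w * q ^ 3 - (3 * c ^ 2 * q - 2 * c ^ 3 * r) =
      w * (q - c * r) ^ 2 * (q + 2 * c * r) := by
    linear_combination (3 * c ^ 2 * q - 2 * c ^ 3 * r) * hwr
  have : 0 ≤ w * (q - c * r) ^ 2 * (q + 2 * c * r) := by positivity
  linarith

theorem inv_sq_integral_rpow_neg_half_le_integral_mul_pow_three {α : Type*} [MeasurableSpace α]
    {μ : Measure α} {w q : α → ℝ} (hw : ∀ᵐ x ∂μ, 0 < w x) (hq : 0 ≤ᵐ[μ] q)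
    (hq_one : ∫ x, q x ∂μ = 1) (hwq : Integrable (fun x => w x * q x ^ 3) μ) :
    ((∫ x, w x ^ (-(1 / 2) : ℝ) ∂μ) ^ 2)⁻¹ ≤ ∫ x, w x * q x ^ 3 ∂μ := by
  set B := ∫ x, w x ^ (-(1 / 2) : ℝ) ∂μ
  have hwq_nonneg : 0 ≤ ∫ x, w x * q x ^ 3 ∂μ := integral_nonneg_of_ae <| by
    filter_upwards [hw, hq] with x hwx hqx using mul_nonneg hwx.le (pow_nonneg hqx 3)
  rcases eq_or_ne B 0 with hB | hB
  · simpa [hB] using hwq_nonneg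
  have hr : Integrable (fun x => w x ^ (-(1 / 2) : ℝ)) μ := by
    by_contra hr; exact hB (integral_undef hr)
  have hq_int : Integrable q μ := by
    by_contra hq_int; simp [integral_undef hq_int] at hq_one
  have hB_pos : 0 < B := (integral_nonneg_of_ae <| by
    filter_upwards [hw] with x hwx using Real.rpow_nonneg hwx.le _).lt_of_ne' hB
  calc (B ^ 2)⁻¹ = 3 * B⁻¹ ^ 2 * (∫ x, q x ∂μ) - 2 * B⁻¹ ^ 3 * B := by
        rw [hq_one]; field_simp; ring
    _ = ∫ x, 3 * B⁻¹ ^ 2 * q x - 2 * B⁻¹ ^ 3 * w x ^ (-(1 / 2) : ℝ) ∂μ := by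
        rw [integral_sub (hq_int.const_mul _) (hr.const_mul _), MeasureTheory.integral_const_mul,
          MeasureTheory.integral_const_mul]
    _ ≤ ∫ x, w x * q x ^ 3 ∂μ := by
        refine integral_mono_ae ((hq_int.const_mul _).sub (hr.const_mul _)) hwq ?_
        filter_upwards [hw, hq] with x hwx hqx
        exact three_mul_sq_mul_sub_le_mul_pow_three hwx hqx (inv_nonneg.2 hB_pos.le)

lemma integral_sub_integral_pos {f : ℝ → ℝ} {a b y : ℝ} (hf : IntervalIntegrable f volume a b)
    (hf_pos : ∀ x ∈ Ioo a b, 0 < f x) (hy : y ∈ Ico a b) :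
    0 < (∫ s in a..b, f s) - ∫ s in a..y, f s := by
  have hy' : y ∈ uIcc a b := Icc_subset_uIcc (Ico_subset_Icc_self hy)
  rw [integral_interval_sub_left hf (hf.mono_set (uIcc_subset_uIcc_left hy'))]
  refine intervalIntegral_pos_of_pos_on (hf.mono_set (uIcc_subset_uIcc hy' right_mem_uIcc))
    (fun x hx => hf_pos x ⟨hy.1.trans_lt hx.1, hx.2⟩) hy.2

theorem stmt_7_general (y_m : ℝ) (hym : 0 < y_m) (f : ℝ → ℝ)
    (hf_cont : ContinuousOn f (Set.Icc 0 y_m))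
    (hf_pos : ∀ y ∈ Set.Icc 0 y_m, 0 < f y)
    (F h : ℝ → ℝ)
    (hF : ∀ y, F y = ∫ s in (0:ℝ)..y, f s)
    (hh : ∀ y, h y = F y_m - F y)
    (q : ℝ → ℝ)
    (hq_pos : ∀ s ∈ Set.Ioo 0 y_m, 0 < q s)
    (hq_norm : (∫ s in (0:ℝ)..y_m, q s) = 1)
    (hint : IntervalIntegrable (fun s => h s * (q s) ^ 3) volume 0 y_m) :
    (∫ s in (0:ℝ)..y_m, h s * (q s) ^ 3)
      ≥ ((∫ s in (0:ℝ)..y_m, (h s) ^ (-(1/2) : ℝ)) ^ 2)⁻¹ := by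
  have hf_int : IntervalIntegrable f volume 0 y_m := hf_cont.intervalIntegrable_of_Icc hym.le
  have hh_pos : ∀ y ∈ Ioo 0 y_m, 0 < h y := fun y hy => by
    rw [hh, hF, hF]
    exact integral_sub_integral_pos hf_int (fun x hx => hf_pos x (Ioo_subset_Icc_self hx))
      (Ioo_subset_Ico_self hy)
  simp only [integral_of_le hym.le, integral_Ioc_eq_integral_Ioo] at hq_norm ⊢
  exact inv_sq_integral_rpow_neg_half_le_integral_mul_pow_three
    ((ae_restrict_mem measurableSet_Ioo).mono hh_pos)
    ((ae_restrict_mem measurableSet_Ioo).mono fun s hs => (hq_pos s hs).le) hq_norm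
    ((intervalIntegrable_iff_integrableOn_Ioo_of_le hym.le).1 hint)

/-- The reformulated variational principle (2.12b): for every admissible `q`
(continuous, positive, with `∫₀^{y_m} q = 1`), one has
`∫₀^{y_m} h q³ ≥ (∫₀^{y_m} h^{-1/2})^{-2}`. -/
theorem stmt_7 (y_m : ℝ) (hym : 0 < y_m) (f : ℝ → ℝ)
    (hf_cont : ContinuousOn f (Set.Icc 0 y_m))
    (hf_pos : ∀ y ∈ Set.Icc 0 y_m, 0 < f y)
    (F h : ℝ → ℝ)
    (hF : ∀ y, F y = ∫ s in (0:ℝ)..y, f s)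
    (hh : ∀ y, h y = F y_m - F y)
    (q : ℝ → ℝ)
    (hq_cont : ContinuousOn q (Set.Ioo 0 y_m))
    (hq_pos : ∀ s ∈ Set.Ioo 0 y_m, 0 < q s)
    (hq_norm : (∫ s in (0:ℝ)..y_m, q s) = 1)
    (hint : IntervalIntegrable (fun s => h s * (q s) ^ 3) volume 0 y_m) :
    (∫ s in (0:ℝ)..y_m, h s * (q s) ^ 3)
      ≥ ((∫ s in (0:ℝ)..y_m, (h s) ^ (-(1/2) : ℝ)) ^ 2)⁻¹ :=
  stmt_7_general y_m hym f hf_cont hf_pos F h hF hh q hq_pos hq_norm hint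
end

section
/- Let y_m > 0 and let f : ℝ → ℝ be continuous and strictly positive on [0, y_m]. Set F(y) = ∫₀^y f(s) ds, h(y) = F(y_m) − F(y), and C = ∫₀^{y_m} h(s)^{-1/2} ds. Define q(s) = h(s)^{-1/2} / C. Then q > 0 on (0, y_m), ∫₀^{y_m} q(s) ds = 1, and ∫₀^{y_m} h(s) q(s)³ ds = C^{-2}; i.e. the minimum in the reformulated variational principle is attained at q proportional to h^{-1/2}. -/
/-!
Since `f ≥ m > 0`, `h(s) = ∫ₛ^{y_m} f ≥ m (y_m - s)`, so `h^{-1/2}` is dominated by the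
integrable singularity `m^{-1/2} (y_m - s)^{-1/2}` and `C` is a finite positive number. The
identities then follow from `h · (h^{-1/2})³ = h^{-1/2}`.
-/

open MeasureTheory intervalIntegral Set

theorem exists_pos_mul_sub_le_integral {f : ℝ → ℝ} {a b : ℝ} (hab : a ≤ b)
    (hf : ContinuousOn f (Icc a b)) (hf_pos : ∀ x ∈ Icc a b, 0 < f x) :
    ∃ m > 0, ∀ s ∈ Icc a b, m * (b - s) ≤ ∫ t in s..b, f t := by
  obtain ⟨x₀, hx₀, hmin⟩ := isCompact_Icc.exists_isMinOn (nonempty_Icc.mpr hab) hf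
  refine ⟨f x₀, hf_pos x₀ hx₀, fun s hs => ?_⟩
  have hmono := integral_mono_on hs.2 (intervalIntegrable_const (μ := volume))
    ((hf.mono (Icc_subset_Icc_left hs.1)).intervalIntegrable_of_Icc hs.2)
    (fun x hx => hmin ⟨hs.1.trans hx.1, hx.2⟩)
  rwa [intervalIntegral.integral_const, smul_eq_mul, mul_comm] at hmono

theorem intervalIntegrable_rpow_of_mul_sub_le {g : ℝ → ℝ} {a b m p : ℝ} (hab : a ≤ b)
    (hm : 0 < m) (hp : -1 < p) (hp_nonpos : p ≤ 0) (hg : ContinuousOn g (Ioo a b))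
    (hlow : ∀ s ∈ Ioo a b, m * (b - s) ≤ g s) :
    IntervalIntegrable (fun s => g s ^ p) volume a b := by
  have hg_pos : ∀ s ∈ Ioo a b, 0 < g s := fun s hs =>
    (mul_pos hm (sub_pos.mpr hs.2)).trans_le (hlow s hs)
  have hbound : IntervalIntegrable (fun s => m ^ p * (b - s) ^ p) volume a b := by
    simpa using ((intervalIntegrable_rpow' (a := 0) (b := b - a) hp).comp_sub_left b).symm.const_mul (m ^ p)
  have hrestrict : volume.restrict (uIoc a b) = volume.restrict (Ioo a b) := by
    rw [uIoc_of_le hab]; exact Measure.restrict_congr_set Ioo_ae_eq_Ioc.symm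
  refine hbound.mono_fun' ?_ ?_
  · rw [hrestrict]
    exact (hg.rpow_const fun x hx => Or.inl (hg_pos x hx).ne').aestronglyMeasurable
      measurableSet_Ioo
  · rw [hrestrict]
    filter_upwards [ae_restrict_mem measurableSet_Ioo] with s hs
    have hms : 0 < m * (b - s) := mul_pos hm (sub_pos.mpr hs.2)
    rw [Real.norm_of_nonneg (Real.rpow_nonneg (hg_pos s hs).le _),
      ← Real.mul_rpow hm.le (sub_pos.mpr hs.2).le]
    exact Real.rpow_le_rpow_of_nonpos hms (hlow s hs) hp_nonpos

/-- Includes `x = 0`, thanks to the junk value `0 ^ (-1/2) = 0`. -/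
theorem Real.mul_rpow_neg_half_pow_three {x : ℝ} (hx : 0 ≤ x) :
    x * (x ^ (-(1 / 2) : ℝ)) ^ 3 = x ^ (-(1 / 2) : ℝ) := by
  rcases hx.eq_or_lt with rfl | hx
  · simp
  · rw [← Real.rpow_natCast, ← Real.rpow_mul hx.le, ← Real.rpow_one_add' hx.le (by norm_num)]
    norm_num

/-- The minimum in the reformulated variational principle (2.12b) is attained
at `q = h^{-1/2}/C` with `C = ∫₀^{y_m} h^{-1/2}`: this `q` is positive,
normalized, and satisfies `∫₀^{y_m} h q³ = C^{-2}`. -/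
theorem stmt_8 (y_m : ℝ) (hym : 0 < y_m) (f : ℝ → ℝ)
    (hf_cont : ContinuousOn f (Set.Icc 0 y_m))
    (hf_pos : ∀ y ∈ Set.Icc 0 y_m, 0 < f y)
    (F h : ℝ → ℝ)
    (hF : ∀ y, F y = ∫ s in (0:ℝ)..y, f s)
    (hh : ∀ y, h y = F y_m - F y)
    (C : ℝ) (hC : C = ∫ s in (0:ℝ)..y_m, (h s) ^ (-(1/2) : ℝ))
    (q : ℝ → ℝ) (hq : ∀ s, q s = (h s) ^ (-(1/2) : ℝ) / C) :
    (∀ s ∈ Set.Ioo 0 y_m, 0 < q s) ∧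
      (∫ s in (0:ℝ)..y_m, q s) = 1 ∧
      (∫ s in (0:ℝ)..y_m, h s * (q s) ^ 3) = (C ^ 2)⁻¹ := by
  have hh_eq : EqOn h (fun s => ∫ t in s..y_m, f t) (Icc 0 y_m) := fun s hs => by
    rw [hh, hF, hF, integral_interval_sub_left
      (hf_cont.intervalIntegrable_of_Icc hym.le)
      ((hf_cont.mono (Icc_subset_Icc_right hs.2)).intervalIntegrable_of_Icc hs.1)]
  obtain ⟨m, hm, hlow⟩ := exists_pos_mul_sub_le_integral hym.le hf_cont hf_pos
  replace hlow : ∀ s ∈ Icc 0 y_m, m * (y_m - s) ≤ h s := fun s hs =>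
    (hh_eq hs).symm ▸ hlow s hs
  have hh_pos : ∀ s ∈ Ioo 0 y_m, 0 < h s := fun s hs =>
    (mul_pos hm (sub_pos.mpr hs.2)).trans_le (hlow s (Ioo_subset_Icc_self hs))
  have hh_cont : ContinuousOn h (Icc 0 y_m) := by
    have := continuousOn_primitive_interval_left (μ := volume) (b := y_m)
      (by rw [uIcc_of_le hym.le]; exact hf_cont.integrableOn_Icc)
    rw [uIcc_of_le hym.le] at this
    exact this.congr hh_eq
  have hint : IntervalIntegrable (fun s => h s ^ (-(1 / 2) : ℝ)) volume 0 y_m :=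
    intervalIntegrable_rpow_of_mul_sub_le hym.le hm (by norm_num) (by norm_num)
      (hh_cont.mono Ioo_subset_Icc_self) fun s hs => hlow s (Ioo_subset_Icc_self hs)
  have hC_pos : 0 < C := hC ▸ intervalIntegral_pos_of_pos_on hint
    (fun s hs => Real.rpow_pos_of_pos (hh_pos s hs) _) hym
  refine ⟨fun s hs => hq s ▸ div_pos (Real.rpow_pos_of_pos (hh_pos s hs) _) hC_pos, ?_, ?_⟩
  · simp only [hq]
    rw [intervalIntegral.integral_div, ← hC, div_self hC_pos.ne']
  · have hcube : EqOn (fun s => h s * q s ^ 3) (fun s => h s ^ (-(1 / 2) : ℝ) / C ^ 3)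
        (uIcc 0 y_m) := fun s hs => by
      rw [uIcc_of_le hym.le] at hs
      simp only [hq, div_pow, mul_div_assoc',
        Real.mul_rpow_neg_half_pow_three ((mul_nonneg hm.le (sub_nonneg.mpr hs.2)).trans
          (hlow s hs))]
    rw [integral_congr hcube, intervalIntegral.integral_div, ← hC]
    field_simp
end

section
/- Let δ ≥ 0 and x_m > 0. Define h(s) = (x_m² − s²)/2 + δ(x_m⁴ − s⁴)/4 for s ∈ [0, x_m]. Then (1/2)·(∫₀^{x_m} h(s)^{-1/2} ds)² ≥ (π²/4)·1/(1 + (3/4)δ x_m²). -/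
/-!
Write `h s = (x_m² - s²) W(s) / 2` with `W(s) = 1 + δ (x_m² + s²) / 2`. Then
`∫ h^{-1/2} = √2 ∫ W^{-1/2} dμ` for the arcsine weight `dμ = (x_m² - s²)^{-1/2} ds` of mass
`π/2`, and `W` has `μ`-mean exactly `K = 1 + 3δx_m²/4`. Jensen's inequality for the convex
`t ↦ t^{-1/2}`, in the form of its tangent line at `K`, gives `∫ h^{-1/2} ≥ √2 (π/2) / √K`;
squaring gives the bound.
-/

open MeasureTheory intervalIntegral Set Real

lemma tangent_le_one_div_sqrt {x k : ℝ} (hx : 0 < x) (hk : 0 < k) :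
    (3 * k - x) / (2 * k * √k) ≤ 1 / √x := by
  obtain ⟨u, hu, rfl⟩ : ∃ u, 0 < u ∧ u ^ 2 = x := ⟨√x, sqrt_pos.2 hx, sq_sqrt hx.le⟩
  obtain ⟨v, hv, rfl⟩ : ∃ v, 0 < v ∧ v ^ 2 = k := ⟨√k, sqrt_pos.2 hk, sq_sqrt hk.le⟩
  rw [sqrt_sq hu.le, sqrt_sq hv.le, div_le_div_iff₀ (by positivity) hu]
  nlinarith [mul_nonneg (sq_nonneg (u - v)) (by positivity : (0:ℝ) ≤ u + 2 * v)]

lemma integral_div_sqrt_ge_of_mean_eq {w W : ℝ → ℝ} {a b K : ℝ} (hab : a ≤ b) (hK : 0 < K)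
    (hw : ∀ s ∈ Icc a b, 0 ≤ w s) (hW : ∀ s ∈ Icc a b, 0 < W s)
    (hwi : IntervalIntegrable w volume a b) (hWc : ContinuousOn W (Icc a b))
    (hmean : ∫ s in a..b, w s * W s = K * ∫ s in a..b, w s) :
    (∫ s in a..b, w s) / √K ≤ ∫ s in a..b, w s / √(W s) := by
  rw [← uIcc_of_le hab] at hWc
  have hwWi := hwi.mul_continuousOn hWc
  have hi : IntervalIntegrable (fun s => w s / √(W s)) volume a b := by
    simpa only [div_eq_mul_inv] using hwi.mul_continuousOn (g := fun s => (√(W s))⁻¹)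
      (hWc.sqrt.inv₀ fun s hs => (sqrt_pos.2 (hW s (by rwa [uIcc_of_le hab] at hs))).ne')
  have hlin : ∫ s in a..b, (3 * K * w s - w s * W s) / (2 * K * √K)
      = (∫ s in a..b, w s) / √K := by
    rw [intervalIntegral.integral_div, integral_sub (hwi.const_mul _) hwWi,
      intervalIntegral.integral_const_mul, hmean]
    field_simp
    ring
  rw [← hlin]
  refine integral_mono_on hab (((hwi.const_mul _).sub hwWi).div_const _) hi fun s hs => ?_
  calc (3 * K * w s - w s * W s) / (2 * K * √K) = w s * ((3 * K - W s) / (2 * K * √K)) := by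
        ring
    _ ≤ w s * (1 / √(W s)) :=
        mul_le_mul_of_nonneg_left (tangent_le_one_div_sqrt (hW s hs) hK) (hw s hs)
    _ = w s / √(W s) := by ring

lemma hasDerivAt_arcsin_div {a s : ℝ} (hs : |s| < a) :
    HasDerivAt (fun u => arcsin (u / a)) (√(a ^ 2 - s ^ 2))⁻¹ s := by
  obtain ⟨hsl, hsr⟩ := abs_lt.mp hs
  have ha : 0 < a := by linarith
  have harcsin := hasDerivAt_arcsin (x := s / a) (by rw [ne_eq, div_eq_iff ha.ne']; linarith)
    (by rw [ne_eq, div_eq_iff ha.ne']; linarith)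
  refine (harcsin.comp s ((hasDerivAt_id' s).div_const a)).congr_deriv ?_
  have hsq : 1 - (s / a) ^ 2 = (a ^ 2 - s ^ 2) / a ^ 2 := by field_simp
  rw [hsq, sqrt_div' _ (sq_nonneg a), sqrt_sq ha.le]
  field_simp

lemma hasDerivAt_mul_sqrt_sq_sub {a s : ℝ} (hs : |s| < a) :
    HasDerivAt (fun u => u * √(a ^ 2 - u ^ 2)) ((a ^ 2 - 2 * s ^ 2) / √(a ^ 2 - s ^ 2)) s := by
  have hpos : 0 < a ^ 2 - s ^ 2 := by nlinarith [abs_nonneg s, sq_abs s]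
  have hsqrt := (hasDerivAt_sqrt hpos.ne').comp s ((hasDerivAt_pow 2 s).const_sub (a ^ 2))
  refine ((hasDerivAt_id' s).mul hsqrt).congr_deriv ?_
  have hsqrt_sq := sq_sqrt hpos.le
  simp only [Function.comp_apply]
  field_simp
  norm_num
  linarith

lemma abs_lt_of_mem_Ioo_zero {a s : ℝ} (hs : s ∈ Ioo 0 a) : |s| < a :=
  abs_lt.mpr ⟨by linarith [hs.1, hs.2], hs.2⟩

lemma intervalIntegrable_inv_sqrt_sq_sub {a : ℝ} (ha : 0 < a) :
    IntervalIntegrable (fun s => (√(a ^ 2 - s ^ 2))⁻¹) volume 0 a :=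
  (intervalIntegrable_iff_integrableOn_Ioc_of_le ha.le).2 <|
    integrableOn_deriv_of_nonneg (by fun_prop)
      (fun s hs => hasDerivAt_arcsin_div (abs_lt_of_mem_Ioo_zero hs)) (fun _ _ => by positivity)

lemma integral_inv_sqrt_sq_sub {a : ℝ} (ha : 0 < a) :
    ∫ s in (0:ℝ)..a, (√(a ^ 2 - s ^ 2))⁻¹ = π / 2 := by
  rw [integral_eq_sub_of_hasDerivAt_of_le ha.le (by fun_prop)
    (fun s hs => hasDerivAt_arcsin_div (abs_lt_of_mem_Ioo_zero hs))
    (intervalIntegrable_inv_sqrt_sq_sub ha)]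
  simp [div_self ha.ne']

lemma integral_sq_mul_inv_sqrt_sq_sub {a : ℝ} (ha : 0 < a) :
    ∫ s in (0:ℝ)..a, s ^ 2 * (√(a ^ 2 - s ^ 2))⁻¹ = π * a ^ 2 / 4 := by
  have hderiv : ∀ s ∈ Ioo 0 a,
      HasDerivAt (fun u => a ^ 2 / 2 * arcsin (u / a) - u * √(a ^ 2 - u ^ 2) / 2)
        (s ^ 2 * (√(a ^ 2 - s ^ 2))⁻¹) s := fun s hs => by
    have hs' := abs_lt_of_mem_Ioo_zero hs
    refine (((hasDerivAt_arcsin_div hs').const_mul _).sub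
      ((hasDerivAt_mul_sqrt_sq_sub hs').div_const 2)).congr_deriv ?_
    field_simp
    ring
  rw [integral_eq_sub_of_hasDerivAt_of_le ha.le (by fun_prop) hderiv
    ((intervalIntegrable_inv_sqrt_sq_sub ha).continuousOn_mul (by fun_prop))]
  simp only [div_self ha.ne', arcsin_one, arcsin_zero, sub_self, sqrt_zero, mul_zero, zero_div,
    sub_zero]
  ring

/-- The lower bound (3.4) on the principal eigenvalue of the Duffing
oscillator: `λ = (1/2)(∫₀^{x_m} h^{-1/2})² ≥ (π²/4)/(1 + 3δx_m²/4)`,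
where `h(s) = (x_m² − s²)/2 + δ(x_m⁴ − s⁴)/4`. -/
theorem stmt_13 (δ x_m : ℝ) (hδ : 0 ≤ δ) (hxm : 0 < x_m)
    (h : ℝ → ℝ)
    (hh : ∀ s, h s = (x_m ^ 2 - s ^ 2) / 2 + δ * (x_m ^ 4 - s ^ 4) / 4) :
    (1/2) * (∫ s in (0:ℝ)..x_m, (h s) ^ (-(1/2) : ℝ)) ^ 2
      ≥ (Real.pi ^ 2 / 4) * (1 / (1 + 3 * δ * x_m ^ 2 / 4)) := by
  set K := 1 + 3 * δ * x_m ^ 2 / 4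
  have hK : 0 < K := by positivity
  set w : ℝ → ℝ := fun s => (√(x_m ^ 2 - s ^ 2))⁻¹
  set W : ℝ → ℝ := fun s => 1 + δ * (x_m ^ 2 + s ^ 2) / 2
  have hW : ∀ s, 0 < W s := fun s => by positivity
  have hwi := intervalIntegrable_inv_sqrt_sq_sub hxm
  have hfactor : ∀ s ∈ uIcc 0 x_m, h s ^ (-(1/2) : ℝ) = √2 * (w s / √(W s)) := by
    intro s hs
    rw [uIcc_of_le hxm.le] at hs
    have hsq : 0 ≤ x_m ^ 2 - s ^ 2 := by nlinarith [hs.1, hs.2]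
    have hhW : h s = (x_m ^ 2 - s ^ 2) * W s / 2 := by rw [hh]; ring
    rw [hhW, rpow_neg (by positivity), ← sqrt_eq_rpow, sqrt_div' _ zero_le_two, sqrt_mul hsq]
    simp only [w]
    field_simp
  have hmean : ∫ s in (0:ℝ)..x_m, w s * W s = K * ∫ s in (0:ℝ)..x_m, w s := by
    have hsplit : ∀ s, w s * W s = (1 + δ * x_m ^ 2 / 2) * w s + δ / 2 * (s ^ 2 * w s) :=
      fun s => by ring
    simp only [hsplit]
    rw [integral_add (hwi.const_mul _) ((hwi.continuousOn_mul (by fun_prop)).const_mul _),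
      intervalIntegral.integral_const_mul, intervalIntegral.integral_const_mul,
      integral_inv_sqrt_sq_sub hxm, integral_sq_mul_inv_sqrt_sq_sub hxm]
    ring
  have hjensen := integral_div_sqrt_ge_of_mean_eq hxm.le hK (fun s _ => by positivity)
    (fun s _ => hW s) hwi (by fun_prop) hmean
  rw [integral_inv_sqrt_sq_sub hxm] at hjensen
  rw [integral_congr hfactor, intervalIntegral.integral_const_mul]
  calc π ^ 2 / 4 * (1 / K) = 1 / 2 * (√2 * (π / 2 / √K)) ^ 2 := by
        rw [mul_pow, div_pow, sq_sqrt zero_le_two, sq_sqrt hK.le]; ring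
    _ ≤ _ := by gcongr
end

section
/- Let δ ≥ 0 and x_m > 0, and define g(x) = x/(x_m²·√(x_m² − x²)) for x ∈ [0, x_m). Then g(0) = 0, g'(x) = (x_m² − x²)^{-3/2} > 0 on (0, x_m), and (1/2)·(∫₀^{x_m} g'(x)^{1/3} dx)³ / (∫₀^{x_m} (x + δx³)·g(x) dx) = (π²/4)·1/(1 + (3/4)δ x_m²). -/
/-!
With `a = x_m`, both integrals are of the form `∫₀^a φ(x) (a² - x²)^{-1/2} dx` with `φ` an even
polynomial: `(g')^{1/3} = (a² - x²)^{-1/2}` and `(x + δx³) g = (x² + δx⁴)(a² - x²)^{-1/2} / a²`.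
Such an integral is computed by the fundamental theorem of calculus from an antiderivative
`α arcsin (x / a) + Q(x) √(a² - x²)` with `Q` a polynomial; the improper integral exists because the
kernel is the nonnegative derivative of `arcsin (x / a)`. The numerator integral is `π / 2` and the
denominator `(π / 4)(1 + 3δa² / 4)`.
-/

open MeasureTheory intervalIntegral Set Real

section ArcsinKernel

variable {a x : ℝ}

lemma sq_sub_sq_pos_of_mem_Ioo (hx : x ∈ Ioo (-a) a) : 0 < a ^ 2 - x ^ 2 := by
  nlinarith [hx.1, hx.2]

lemma rpow_neg_half_eq_inv_sqrt {t : ℝ} (ht : 0 ≤ t) : t ^ (-(1/2) : ℝ) = (√t)⁻¹ := by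
  rw [rpow_neg ht, sqrt_eq_rpow]

lemma hasDerivAt_sqrt_sq_sub_sq (hx : 0 < a ^ 2 - x ^ 2) :
    HasDerivAt (fun y => √(a ^ 2 - y ^ 2)) (-(2 * x) / (2 * √(a ^ 2 - x ^ 2))) x :=
  ((hasDerivAt_pow 2 x).const_sub (a ^ 2)).sqrt hx.ne' |>.congr_deriv (by simp)

lemma hasDerivAt_arcsin_div_s14 (hx : x ∈ Ioo (-a) a) :
    HasDerivAt (fun y => arcsin (y / a)) ((a ^ 2 - x ^ 2) ^ (-(1/2) : ℝ)) x := by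
  have ha : 0 < a := by linarith [hx.1, hx.2]
  have hxa : x / a ∈ Ioo (-1) 1 := by
    rw [mem_Ioo, lt_div_iff₀ ha, div_lt_iff₀ ha]; constructor <;> linarith [hx.1, hx.2]
  refine ((hasDerivAt_arcsin hxa.1.ne' hxa.2.ne).comp x
    ((hasDerivAt_id x).div_const a)).congr_deriv ?_
  have hpos := sq_sub_sq_pos_of_mem_Ioo hx
  have : 1 - (x / a) ^ 2 = (a ^ 2 - x ^ 2) / a ^ 2 := by field_simp
  rw [rpow_neg_half_eq_inv_sqrt hpos.le, this, sqrt_div hpos.le, sqrt_sq ha.le]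
  field_simp

lemma intervalIntegrable_sq_sub_sq_rpow_neg_half (ha : 0 < a) :
    IntervalIntegrable (fun x => (a ^ 2 - x ^ 2) ^ (-(1/2) : ℝ)) volume 0 a := by
  have hIoo : Ioo 0 a ⊆ Ioo (-a) a := Ioo_subset_Ioo_left (neg_nonpos.2 ha.le)
  exact (intervalIntegrable_iff_integrableOn_Ioc_of_le ha.le).2 <|
    integrableOn_deriv_of_nonneg (g := fun y => arcsin (y / a)) (by fun_prop)
      (fun x hx => hasDerivAt_arcsin_div_s14 (hIoo hx))
      (fun x hx => rpow_nonneg (sq_sub_sq_pos_of_mem_Ioo (hIoo hx)).le _)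

-- `α arcsin (x / a) + Q x √(a² - x²)` is an antiderivative of the integrand.
theorem integral_mul_sq_sub_sq_rpow_neg_half (ha : 0 < a) (α : ℝ) {Q Q' φ : ℝ → ℝ}
    (hQ : ∀ x, HasDerivAt Q (Q' x) x) (hφ : Continuous φ)
    (hφQ : ∀ x ∈ Ioo 0 a, α + Q' x * (a ^ 2 - x ^ 2) - Q x * x = φ x) :
    ∫ x in 0..a, φ x * (a ^ 2 - x ^ 2) ^ (-(1/2) : ℝ) = α * (π / 2) - Q 0 * a := by
  have hQc : Continuous Q := continuous_iff_continuousAt.2 fun x => (hQ x).continuousAt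
  have hderiv : ∀ x ∈ Ioo 0 a,
      HasDerivAt (fun y => α * arcsin (y / a) + Q y * √(a ^ 2 - y ^ 2))
        (φ x * (a ^ 2 - x ^ 2) ^ (-(1/2) : ℝ)) x := by
    intro x hx
    have hx' : x ∈ Ioo (-a) a := Ioo_subset_Ioo_left (neg_nonpos.2 ha.le) hx
    have hpos := sq_sub_sq_pos_of_mem_Ioo hx'
    refine (((hasDerivAt_arcsin_div_s14 hx').const_mul α).add
      ((hQ x).mul (hasDerivAt_sqrt_sq_sub_sq hpos))).congr_deriv ?_
    have hs : √(a ^ 2 - x ^ 2) ^ 2 = a ^ 2 - x ^ 2 := sq_sqrt hpos.le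
    rw [rpow_neg_half_eq_inv_sqrt hpos.le, ← hφQ x hx]
    field_simp
    linear_combination Q' x * hs
  rw [integral_eq_sub_of_hasDerivAt_of_le ha.le (by fun_prop) hderiv
    ((intervalIntegrable_sq_sub_sq_rpow_neg_half ha).continuousOn_mul hφ.continuousOn)]
  simp [ha.ne', sqrt_sq ha.le]

theorem integral_sq_sub_sq_rpow_neg_half (ha : 0 < a) :
    ∫ x in 0..a, (a ^ 2 - x ^ 2) ^ (-(1/2) : ℝ) = π / 2 := by
  simpa using integral_mul_sq_sub_sq_rpow_neg_half ha 1 (fun x => hasDerivAt_const x 0)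
    continuous_const (φ := fun _ => 1) (fun x _ => by ring)

theorem integral_sq_add_mul_pow_four_mul_sq_sub_sq_rpow_neg_half (ha : 0 < a) (c : ℝ) :
    ∫ x in 0..a, (x ^ 2 + c * x ^ 4) * (a ^ 2 - x ^ 2) ^ (-(1/2) : ℝ)
      = π * a ^ 2 / 4 * (1 + 3 * c * a ^ 2 / 4) := by
  have hQ (x : ℝ) : HasDerivAt (fun y => -(y / 2) - c * (y ^ 3 / 4 + 3 * a ^ 2 * y / 8))
      (-(1 / 2) - c * (3 * x ^ 2 / 4 + 3 * a ^ 2 / 8)) x := by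
    refine ((hasDerivAt_id x).div_const 2).neg.sub
      ((((hasDerivAt_pow 3 x).div_const 4).add
        (((hasDerivAt_id x).const_mul (3 * a ^ 2)).div_const 8)).const_mul c) |>.congr_deriv ?_
    ring
  rw [integral_mul_sq_sub_sq_rpow_neg_half ha (a ^ 2 / 2 + 3 * c * a ^ 4 / 8) hQ (by fun_prop)
    (fun x _ => by ring)]
  ring

lemma hasDerivAt_div_mul_sqrt_sq_sub_sq (hx : x ∈ Ioo (-a) a) :
    HasDerivAt (fun y => y / (a ^ 2 * √(a ^ 2 - y ^ 2))) ((a ^ 2 - x ^ 2) ^ (-(3/2) : ℝ)) x := by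
  have ha : a ≠ 0 := by linarith [hx.1, hx.2]
  have hpos := sq_sub_sq_pos_of_mem_Ioo hx
  have hs : √(a ^ 2 - x ^ 2) ^ 2 = a ^ 2 - x ^ 2 := sq_sqrt hpos.le
  refine ((hasDerivAt_id' x).div ((hasDerivAt_sqrt_sq_sub_sq hpos).const_mul (a ^ 2))
    (by positivity)).congr_deriv ?_
  rw [show (-(3/2) : ℝ) = -1 + -(1/2) by norm_num, rpow_add hpos, rpow_neg_one,
    rpow_neg_half_eq_inv_sqrt hpos.le]
  field_simp
  linear_combination -x ^ 2 * hs

end ArcsinKernel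

/-- Evaluation of the variational functional of Theorem 1 for the Duffing
oscillator at the trial function `g(x) = x/(x_m²√(x_m² − x²))`: one has
`g(0) = 0`, `g'(x) = (x_m² − x²)^{-3/2} > 0`, and the functional equals
`(π²/4)/(1 + 3δx_m²/4)`, which is the bound (3.4). -/
theorem stmt_14 (δ x_m : ℝ) (hδ : 0 ≤ δ) (hxm : 0 < x_m)
    (g : ℝ → ℝ)
    (hg : ∀ x ∈ Set.Ico 0 x_m, g x = x / (x_m ^ 2 * Real.sqrt (x_m ^ 2 - x ^ 2))) :
    g 0 = 0 ∧
    (∀ x ∈ Set.Ioo 0 x_m,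
      HasDerivAt g ((x_m ^ 2 - x ^ 2) ^ (-(3/2) : ℝ)) x ∧
        0 < (x_m ^ 2 - x ^ 2) ^ (-(3/2) : ℝ)) ∧
    (1/2) * (∫ x in (0:ℝ)..x_m, ((x_m ^ 2 - x ^ 2) ^ (-(3/2) : ℝ)) ^ ((1:ℝ)/3)) ^ 3
        / (∫ x in (0:ℝ)..x_m, (x + δ * x ^ 3) * g x)
      = (Real.pi ^ 2 / 4) * (1 / (1 + 3 * δ * x_m ^ 2 / 4)) := by
  have hIoo : Ioo 0 x_m ⊆ Ioo (-x_m) x_m := Ioo_subset_Ioo_left (neg_nonpos.2 hxm.le)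
  refine ⟨by simpa using hg 0 ⟨le_rfl, hxm⟩, fun x hx => ⟨?_, ?_⟩, ?_⟩
  · refine (hasDerivAt_div_mul_sqrt_sq_sub_sq (hIoo hx)).congr_of_eventuallyEq ?_
    filter_upwards [isOpen_Ioo.mem_nhds hx] with y hy using hg y (Ioo_subset_Ico_self hy)
  · exact rpow_pos_of_pos (sq_sub_sq_pos_of_mem_Ioo (hIoo hx)) _
  have hnum : ∫ x in 0..x_m, ((x_m ^ 2 - x ^ 2) ^ (-(3/2) : ℝ)) ^ ((1:ℝ)/3) = π / 2 := by
    rw [← integral_sq_sub_sq_rpow_neg_half hxm]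
    refine integral_congr_Ioo_of_le hxm.le fun x hx => ?_
    rw [← rpow_mul (sq_sub_sq_pos_of_mem_Ioo (hIoo hx)).le]
    norm_num
  have hden : ∫ x in 0..x_m, (x + δ * x ^ 3) * g x = π / 4 * (1 + 3 * δ * x_m ^ 2 / 4) := by
    have hintegrand : EqOn (fun x => (x + δ * x ^ 3) * g x)
        (fun x => (x ^ 2 + δ * x ^ 4) * (x_m ^ 2 - x ^ 2) ^ (-(1/2) : ℝ) / x_m ^ 2)
        (Ioo 0 x_m) := by
      intro x hx
      simp only [hg x (Ioo_subset_Ico_self hx),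
        rpow_neg_half_eq_inv_sqrt (sq_sub_sq_pos_of_mem_Ioo (hIoo hx)).le]
      field_simp
    rw [integral_congr_Ioo_of_le hxm.le hintegrand, intervalIntegral.integral_div,
      integral_sq_add_mul_pow_four_mul_sq_sub_sq_rpow_neg_half hxm]
    field_simp
  rw [hnum, hden]
  have : 0 < 1 + 3 * δ * x_m ^ 2 / 4 := by positivity
  field_simp
  ring
end

section
/- Let δ ≥ 0 and x_m > 0. Define h(s) = (x_m² − s²)/2 + δ(x_m⁴ − s⁴)/4 for s ∈ [0, x_m], and set A = 67108864 − 25165824 δx_m² + 14942208 δ²x_m⁴ − 41287680 δ³x_m⁶ + 31073280 δ⁴x_m⁸ − 24748416 δ⁵x_m¹⁰ + 7192476 δ⁶x_m¹² − 2202957 δ⁷x_m¹⁴ and B = 4(256 − 96 δx_m² + 57 δ²x_m⁴)³. Then 2·(∫₀^{x_m} h(s)^{-1/2} ds)^{-2} ≥ (4/π²)·(A/B). -/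
set_option maxHeartbeats 1000000

open MeasureTheory intervalIntegral Set Real

lemma rpow_neg_half_eq (x : ℝ) : x ^ (-(1/2) : ℝ) = (Real.sqrt x)⁻¹ := by
  rcases le_or_gt 0 x with hx | hx
  · rw [Real.rpow_neg hx, Real.sqrt_eq_rpow]
  · rw [Real.rpow_def_of_neg hx, Real.sqrt_eq_zero'.mpr hx.le,
      (by ring : -(1/2) * Real.pi = -(Real.pi/2)), Real.cos_neg, Real.cos_pi_div_two]
    simp

lemma duff_integrable (δ x_m : ℝ) (hδ : 0 ≤ δ) (hxm : 0 < x_m)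
    (h : ℝ → ℝ)
    (hh : ∀ s, h s = (x_m ^ 2 - s ^ 2) / 2 + δ * (x_m ^ 4 - s ^ 4) / 4) :
    IntervalIntegrable (fun s => (Real.sqrt (h s))⁻¹) volume 0 x_m := by
  have hcont : Continuous h := by
    have : h = fun s => (x_m ^ 2 - s ^ 2) / 2 + δ * (x_m ^ 4 - s ^ 4) / 4 := funext hh
    rw [this]; fun_prop
  -- majorant
  have hmaj : IntervalIntegrable
      (fun s => Real.sqrt (2 / x_m) * (Real.sqrt (x_m - s))⁻¹) volume 0 x_m := by
    have h1 : IntervalIntegrable (fun u : ℝ => u ^ (-(1/2) : ℝ)) volume 0 x_m :=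
      intervalIntegrable_rpow' (by norm_num)
    have h2 := (h1.comp_sub_left x_m).mono_set (by
      rw [sub_self, sub_zero, uIcc_comm] : uIcc (0:ℝ) x_m ⊆ uIcc (x_m - 0) (x_m - x_m))
    have h3 : (fun x => (x_m - x) ^ (-(1/2) : ℝ)) = fun x => (Real.sqrt (x_m - x))⁻¹ := by
      funext x; exact rpow_neg_half_eq _
    rw [h3] at h2
    exact h2.const_mul _
  refine hmaj.mono_fun ?_ ?_
  · exact ((Real.continuous_sqrt.comp hcont).measurable.inv).aestronglyMeasurable
  · filter_upwards [ae_restrict_mem measurableSet_uIoc] with s hs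
    rw [uIoc_of_le hxm.le] at hs
    obtain ⟨hs0, hs1⟩ := hs
    have hkey : (x_m - s) * (x_m / 2) ≤ h s := by
      rw [hh s]
      have e1 : 0 ≤ (x_m - s) * s := mul_nonneg (by linarith) hs0.le
      have hs2 : s ^ 2 ≤ x_m ^ 2 := by nlinarith
      have hs4 : s ^ 4 ≤ x_m ^ 4 := by nlinarith
      have e2 : 0 ≤ δ * (x_m ^ 4 - s ^ 4) := mul_nonneg hδ (by linarith)
      nlinarith [e1, e2]
    have hhs : 0 ≤ h s := le_trans (mul_nonneg (by linarith) (by linarith) : (0:ℝ) ≤ (x_m - s) * (x_m/2)) hkey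
    have hrhs : (0:ℝ) ≤ Real.sqrt (2 / x_m) * (Real.sqrt (x_m - s))⁻¹ := by positivity
    rw [Real.norm_eq_abs, Real.norm_eq_abs, abs_of_nonneg (inv_nonneg.mpr (Real.sqrt_nonneg _)),
      abs_of_nonneg hrhs]
    rcases eq_or_lt_of_le (sub_nonneg.mpr hs1) with heq | hlt
    · have hsx : s = x_m := by linarith
      have : h s = 0 := by rw [hh s, hsx]; ring
      rw [this, Real.sqrt_zero, inv_zero]
      exact hrhs
    · have h4 : Real.sqrt (x_m - s) * Real.sqrt (x_m / 2) ≤ Real.sqrt (h s) := by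
        rw [← Real.sqrt_mul (by linarith)]
        exact Real.sqrt_le_sqrt hkey
      have h5 := inv_anti₀ (by positivity) h4
      calc (Real.sqrt (h s))⁻¹ ≤ (Real.sqrt (x_m - s) * Real.sqrt (x_m / 2))⁻¹ := h5
        _ = Real.sqrt (2 / x_m) * (Real.sqrt (x_m - s))⁻¹ := by
            have e3 : (Real.sqrt (x_m / 2))⁻¹ = Real.sqrt (2 / x_m) := by
              rw [← Real.sqrt_inv, inv_div]
            rw [mul_inv, e3]; ring

noncomputable def duffP (δ x_m : ℝ) : ℝ → ℝ :=
  fun s => 1 - δ*(x_m^2+s^2)/4 + 3*(δ*(x_m^2+s^2))^2/32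

lemma duffP_pos (δ x_m s : ℝ) : 0 < duffP δ x_m s := by
  unfold duffP; nlinarith [sq_nonneg (δ*(x_m^2+s^2) - 4/3)]

lemma duffP_cont (δ x_m : ℝ) : Continuous (duffP δ x_m) := by
  unfold duffP; fun_prop

lemma duff_J (δ x_m : ℝ) :
    ∫ u in (0:ℝ)..(π/2), duffP δ x_m (x_m * Real.sin u)
      = π/2 * (1 - 3/8*(δ*x_m^2) + 57/256*(δ*x_m^2)^2) := by
  have hs2 : ∫ u in (0:ℝ)..(π/2), Real.sin u ^ 2 = π/4 := by
    rw [integral_sin_sq]; simp; ring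
  have hs4 : ∫ u in (0:ℝ)..(π/2), Real.sin u ^ 4 = 3*π/16 := by
    have h := integral_sin_pow (a := 0) (b := π/2) 2
    norm_num at h
    rw [h]; ring
  have key : (fun u => duffP δ x_m (x_m * Real.sin u))
      = fun u => (1 - δ*x_m^2/4 + 3*δ^2*x_m^4/32)
        + ((-(δ*x_m^2)/4 + 3*δ^2*x_m^4/16) * Real.sin u ^ 2
        + (3*δ^2*x_m^4/32) * Real.sin u ^ 4) := by
    funext u; unfold duffP; ring
  rw [key]
  set c0 : ℝ := 1 - δ*x_m^2/4 + 3*δ^2*x_m^4/32 with hc0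
  set c2 : ℝ := -(δ*x_m^2)/4 + 3*δ^2*x_m^4/16 with hc2
  set c4 : ℝ := 3*δ^2*x_m^4/32 with hc4
  have int2 : IntervalIntegrable (fun u : ℝ => c2 * Real.sin u ^ 2) volume 0 (π/2) :=
    (by fun_prop : Continuous fun u : ℝ => c2 * Real.sin u ^ 2).intervalIntegrable _ _
  have int4 : IntervalIntegrable (fun u : ℝ => c4 * Real.sin u ^ 4) volume 0 (π/2) :=
    (by fun_prop : Continuous fun u : ℝ => c4 * Real.sin u ^ 4).intervalIntegrable _ _
  rw [intervalIntegral.integral_add intervalIntegrable_const (int2.add int4),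
    intervalIntegral.integral_add int2 int4, intervalIntegral.integral_const,
    intervalIntegral.integral_const_mul, intervalIntegral.integral_const_mul, hs2, hs4,
    hc0, hc2, hc4]
  simp only [smul_eq_mul]
  ring

lemma duff_front (δ x_m : ℝ) (hδ : 0 ≤ δ) (hxm : 0 < x_m)
    (h : ℝ → ℝ)
    (hh : ∀ s, h s = (x_m ^ 2 - s ^ 2) / 2 + δ * (x_m ^ 4 - s ^ 4) / 4)
    (hint : IntervalIntegrable (fun s => (Real.sqrt (h s))⁻¹) volume 0 x_m)
    (b : ℝ) (hb0 : 0 ≤ b) (hbx : b < x_m) :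
    ∫ s in (0:ℝ)..b, (Real.sqrt (h s))⁻¹
      ≤ Real.sqrt 2 * ∫ u in (0:ℝ)..(π/2), duffP δ x_m (x_m * Real.sin u) := by
  set θ := Real.arcsin (b / x_m) with hθdef
  have hbx1 : b / x_m < 1 := (div_lt_one hxm).mpr hbx
  have hbx0 : 0 ≤ b / x_m := div_nonneg hb0 hxm.le
  have hθ0 : 0 ≤ θ := Real.arcsin_nonneg.mpr hbx0
  have hθlt : θ < π/2 := Real.arcsin_lt_pi_div_two.mpr hbx1
  have hsinθ : Real.sin θ = b / x_m := Real.sin_arcsin (by linarith) hbx1.le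
  have hfb : x_m * Real.sin θ = b := by rw [hsinθ]; field_simp
  set gφ : ℝ → ℝ := fun s => Real.sqrt 2 * duffP δ x_m s * (Real.sqrt (x_m^2 - s^2))⁻¹
    with hgφ
  -- continuity of gφ on [0, b]
  have hgφcont : ContinuousOn gφ (Icc 0 b) := by
    apply ContinuousOn.mul
    · exact (continuous_const.mul (duffP_cont δ x_m)).continuousOn
    · apply ContinuousOn.inv₀
      · exact (Real.continuous_sqrt.comp (by fun_prop)).continuousOn
      · intro s hs
        have : 0 < x_m^2 - s^2 := by
          obtain ⟨h1, h2⟩ := hs; nlinarith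
        exact ne_of_gt (Real.sqrt_pos.mpr this)
  -- substitution
  have himg : ((fun u => x_m * Real.sin u) '' uIcc 0 θ) ⊆ Icc 0 b := by
    rintro _ ⟨u, hu, rfl⟩
    rw [uIcc_of_le hθ0] at hu
    obtain ⟨hu0, hu1⟩ := hu
    constructor
    · exact mul_nonneg hxm.le (Real.sin_nonneg_of_nonneg_of_le_pi hu0 (by linarith [Real.pi_pos]))
    · have hsle : Real.sin u ≤ Real.sin θ := by
        rcases eq_or_lt_of_le hu1 with rfl | hlt
        · exact le_rfl
        · exact (Real.strictMonoOn_sin ⟨by linarith [Real.pi_pos], by linarith⟩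
            ⟨by linarith [Real.pi_pos], by linarith⟩ hlt).le
      show x_m * Real.sin u ≤ b
      calc x_m * Real.sin u ≤ x_m * Real.sin θ := by
            exact mul_le_mul_of_nonneg_left hsle hxm.le
        _ = b := hfb
  have hsub : ∫ u in (0:ℝ)..θ, (x_m * Real.cos u) • (gφ ∘ (fun v => x_m * Real.sin v)) u
      = ∫ s in (x_m * Real.sin 0)..(x_m * Real.sin θ), gφ s := by
    apply integral_comp_smul_deriv'
    · intro x _; exact (Real.hasDerivAt_sin x).const_mul x_m
    · fun_prop
    · exact hgφcont.mono himg
  rw [Real.sin_zero, mul_zero, hfb] at hsub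
  -- simplify the substituted integrand
  have hLHS : ∫ u in (0:ℝ)..θ, (x_m * Real.cos u) • (gφ ∘ (fun v => x_m * Real.sin v)) u
      = Real.sqrt 2 * ∫ u in (0:ℝ)..θ, duffP δ x_m (x_m * Real.sin u) := by
    rw [← intervalIntegral.integral_const_mul]
    apply intervalIntegral.integral_congr
    intro u hu
    rw [uIcc_of_le hθ0] at hu
    obtain ⟨hu0, hu1⟩ := hu
    have hcos : 0 < Real.cos u :=
      Real.cos_pos_of_mem_Ioo ⟨by linarith [Real.pi_pos], by linarith⟩
    have hxcos : 0 < x_m * Real.cos u := mul_pos hxm hcos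
    have hsq : Real.sqrt (x_m^2 - (x_m * Real.sin u)^2) = x_m * Real.cos u := by
      have : x_m^2 - (x_m * Real.sin u)^2 = (x_m * Real.cos u)^2 := by
        have := Real.sin_sq_add_cos_sq u; nlinarith [this]
      rw [this, Real.sqrt_sq hxcos.le]
    simp only [smul_eq_mul, Function.comp_apply, hgφ, hsq]
    field_simp
  -- pointwise bound on [0, b]
  have hpt : ∀ s ∈ Icc (0:ℝ) b, (Real.sqrt (h s))⁻¹ ≤ gφ s := by
    intro s hs
    obtain ⟨hs0, hs1⟩ := hs
    have hD : 0 < x_m^2 - s^2 := by nlinarith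
    have hw : 0 ≤ δ * (x_m^2 + s^2) := mul_nonneg hδ (by nlinarith)
    have hP := duffP_pos δ x_m s
    have hhpos : 0 < h s := by rw [hh s]; nlinarith
    have key2 : x_m^2 - s^2 ≤ 2 * ((duffP δ x_m s)^2 * h s) := by
      rw [hh s]
      unfold duffP
      nlinarith [mul_nonneg (mul_nonneg hD.le (pow_nonneg hw 3))
        (by nlinarith [sq_nonneg (δ*(x_m^2+s^2) - 5/3)] :
          (0:ℝ) ≤ 40 - 15*(δ*(x_m^2+s^2)/2) + 9*(δ*(x_m^2+s^2)/2)^2)]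
    have hstep : Real.sqrt (x_m^2 - s^2) ≤ Real.sqrt 2 * duffP δ x_m s * Real.sqrt (h s) := by
      have h1 := Real.sqrt_le_sqrt key2
      rw [Real.sqrt_mul (by norm_num) ((duffP δ x_m s)^2 * h s),
        Real.sqrt_mul (sq_nonneg _) (h s), Real.sqrt_sq hP.le] at h1
      linarith [h1]
    have hsh : 0 < Real.sqrt (h s) := Real.sqrt_pos.mpr hhpos
    have hsD : 0 < Real.sqrt (x_m^2 - s^2) := Real.sqrt_pos.mpr hD
    have hfinal : (Real.sqrt (h s))⁻¹
        ≤ Real.sqrt 2 * duffP δ x_m s * (Real.sqrt (x_m^2 - s^2))⁻¹ := by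
      calc (Real.sqrt (h s))⁻¹
          = Real.sqrt (x_m^2 - s^2) * ((Real.sqrt (x_m^2 - s^2))⁻¹ * (Real.sqrt (h s))⁻¹) := by
            field_simp
        _ ≤ (Real.sqrt 2 * duffP δ x_m s * Real.sqrt (h s))
            * ((Real.sqrt (x_m^2 - s^2))⁻¹ * (Real.sqrt (h s))⁻¹) := by
            apply mul_le_mul_of_nonneg_right hstep (by positivity)
        _ = Real.sqrt 2 * duffP δ x_m s * (Real.sqrt (x_m^2 - s^2))⁻¹
            * (Real.sqrt (h s) * (Real.sqrt (h s))⁻¹) := by ring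
        _ = Real.sqrt 2 * duffP δ x_m s * (Real.sqrt (x_m^2 - s^2))⁻¹ := by
            rw [mul_inv_cancel₀ (ne_of_gt hsh), mul_one]
    exact hfinal
  -- front comparison
  have hmono : ∫ s in (0:ℝ)..b, (Real.sqrt (h s))⁻¹ ≤ ∫ s in (0:ℝ)..b, gφ s := by
    apply intervalIntegral.integral_mono_on hb0
    · refine hint.mono_set ?_
      rw [uIcc_of_le hb0, uIcc_of_le hxm.le]
      exact Icc_subset_Icc le_rfl hbx.le
    · exact (hgφcont.mono (by rw [uIcc_of_le hb0] : uIcc (0:ℝ) b ⊆ Icc 0 b)).intervalIntegrable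
    · exact hpt
  -- trig tail nonneg
  have htail : ∫ u in (0:ℝ)..θ, duffP δ x_m (x_m * Real.sin u)
      ≤ ∫ u in (0:ℝ)..(π/2), duffP δ x_m (x_m * Real.sin u) := by
    have c1 : Continuous fun u : ℝ => duffP δ x_m (x_m * Real.sin u) := by
      exact (duffP_cont δ x_m).comp (by fun_prop)
    have hsplit := intervalIntegral.integral_add_adjacent_intervals
      (c1.intervalIntegrable (μ := volume) 0 θ) (c1.intervalIntegrable (μ := volume) θ (π/2))
    have hnn : 0 ≤ ∫ u in θ..(π/2), duffP δ x_m (x_m * Real.sin u) :=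
      intervalIntegral.integral_nonneg hθlt.le (fun u _ => (duffP_pos δ x_m _).le)
    rw [← hsplit]
    linarith [hnn]
  calc ∫ s in (0:ℝ)..b, (Real.sqrt (h s))⁻¹ ≤ ∫ s in (0:ℝ)..b, gφ s := hmono
    _ = Real.sqrt 2 * ∫ u in (0:ℝ)..θ, duffP δ x_m (x_m * Real.sin u) := by
        rw [← hsub, hLHS]
    _ ≤ Real.sqrt 2 * ∫ u in (0:ℝ)..(π/2), duffP δ x_m (x_m * Real.sin u) := by
        apply mul_le_mul_of_nonneg_left htail (Real.sqrt_nonneg 2)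

/-- The upper bound (3.11) on the principal eigenvalue of the Duffing
oscillator from the dual variational principle:
`1/λ = 2(∫₀^{x_m} h^{-1/2})^{-2} ≥ (4/π²)(A/B)`. -/
theorem stmt_17 (δ x_m : ℝ) (hδ : 0 ≤ δ) (hxm : 0 < x_m)
    (h : ℝ → ℝ)
    (hh : ∀ s, h s = (x_m ^ 2 - s ^ 2) / 2 + δ * (x_m ^ 4 - s ^ 4) / 4)
    (A B : ℝ)
    (hA : A = 67108864 - 25165824 * δ * x_m ^ 2 + 14942208 * δ ^ 2 * x_m ^ 4
        - 41287680 * δ ^ 3 * x_m ^ 6 + 31073280 * δ ^ 4 * x_m ^ 8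
        - 24748416 * δ ^ 5 * x_m ^ 10 + 7192476 * δ ^ 6 * x_m ^ 12
        - 2202957 * δ ^ 7 * x_m ^ 14)
    (hB : B = 4 * (256 - 96 * δ * x_m ^ 2 + 57 * δ ^ 2 * x_m ^ 4) ^ 3) :
    2 * ((∫ s in (0:ℝ)..x_m, (h s) ^ (-(1/2) : ℝ)) ^ 2)⁻¹
      ≥ (4 / Real.pi ^ 2) * (A / B) := by
  have hπ := Real.pi_pos
  simp only [rpow_neg_half_eq]
  set I := ∫ s in (0:ℝ)..x_m, (Real.sqrt (h s))⁻¹ with hI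
  have hint := duff_integrable δ x_m hδ hxm h hh
  -- positivity of I
  have hIpos : 0 < I := by
    apply intervalIntegral_pos_of_pos_on hint _ hxm
    intro s hs
    obtain ⟨hs0, hs1⟩ := hs
    have h1 : s^2 < x_m^2 := by nlinarith
    have h2 : s^4 ≤ x_m^4 := by nlinarith
    have hpos : 0 < h s := by
      rw [hh s]
      nlinarith [mul_nonneg hδ (by linarith : (0:ℝ) ≤ x_m^4 - s^4)]
    exact inv_pos.mpr (Real.sqrt_pos.mpr hpos)
  set q : ℝ := 1 - 3/8*(δ*x_m^2) + 57/256*(δ*x_m^2)^2 with hqdef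
  have hq : 0 < q := by
    rw [hqdef]; nlinarith [sq_nonneg (δ*x_m^2 - 48/57)]
  -- the upper bound on I via the limit of the primitive
  have hM : I ≤ Real.sqrt 2 * (Real.pi/2 * q) := by
    have hFc : ContinuousOn (fun b => ∫ s in (0:ℝ)..b, (Real.sqrt (h s))⁻¹)
        (uIcc 0 x_m) := continuousOn_primitive_interval' hint left_mem_uIcc
    have htd := hFc x_m right_mem_uIcc
    have hne : (nhdsWithin x_m (Ioo 0 x_m)).NeBot := by
      apply mem_closure_iff_nhdsWithin_neBot.mp
      rw [closure_Ioo (ne_of_lt hxm)]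
      exact right_mem_Icc.mpr hxm.le
    have hmono : nhdsWithin x_m (Ioo 0 x_m) ≤ nhdsWithin x_m (uIcc 0 x_m) :=
      nhdsWithin_mono _ (by rw [uIcc_of_le hxm.le]; exact Ioo_subset_Icc_self)
    refine le_of_tendsto (htd.mono_left hmono) ?_
    filter_upwards [self_mem_nhdsWithin] with b hb
    have := duff_front δ x_m hδ hxm h hh hint b hb.1.le hb.2
    rwa [duff_J δ x_m] at this
  have hMsq : (Real.sqrt 2 * (Real.pi/2 * q))^2 = Real.pi^2*q^2/2 := by
    rw [mul_pow, Real.sq_sqrt (by norm_num : (0:ℝ) ≤ 2)]; ring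
  have hI2 : I^2 ≤ Real.pi^2*q^2/2 := by
    calc I^2 ≤ (Real.sqrt 2 * (Real.pi/2 * q))^2 := by
          exact pow_le_pow_left₀ hIpos.le hM 2
      _ = _ := hMsq
  -- algebraic comparison
  have hu : 0 ≤ δ*x_m^2 := mul_nonneg hδ (sq_nonneg x_m)
  have hg : (0:ℝ) ≤ 41287680 - 31073280*(δ*x_m^2) + 24748416*(δ*x_m^2)^2
      - 7192476*(δ*x_m^2)^3 + 2202957*(δ*x_m^2)^4 := by
    nlinarith [sq_nonneg (δ*x_m^2-1), sq_nonneg ((δ*x_m^2)^2-(δ*x_m^2)),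
      sq_nonneg (δ*x_m^2), sq_nonneg ((δ*x_m^2)^2 - 2*(δ*x_m^2)),
      mul_nonneg hu (sq_nonneg (δ*x_m^2-1)), mul_nonneg hu (sq_nonneg (δ*x_m^2)),
      mul_nonneg hu (sq_nonneg (δ*x_m^2-2))]
  have hBpos : 0 < B := by
    have hE : (0:ℝ) < 256 - 96*δ*x_m^2 + 57*δ^2*x_m^4 := by
      nlinarith [sq_nonneg (δ*x_m^2 - 48/57)]
    rw [hB]
    positivity
  have key2 : A * q^2 ≤ B := by
    rw [hA, hB, hqdef]
    nlinarith [mul_nonneg (mul_nonneg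
      (sq_nonneg (1 - 3/8*(δ*x_m^2) + 57/256*(δ*x_m^2)^2))
      (pow_nonneg hu 3)) hg]
  rw [ge_iff_le]
  rcases le_or_gt A 0 with hA0 | hA0
  · have hL : (4 / Real.pi ^ 2) * (A / B) ≤ 0 :=
      mul_nonpos_of_nonneg_of_nonpos (by positivity) (div_nonpos_iff.mpr (Or.inr ⟨hA0, hBpos.le⟩))
    have hR : (0:ℝ) ≤ 2 * (I^2)⁻¹ := by positivity
    linarith
  · have hI2pos : 0 < I^2 := pow_pos hIpos 2
    have e1 : (4 / Real.pi^2) * (A/B) = (4*A)/(Real.pi^2*B) := by ring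
    have e2 : 2*(I^2)⁻¹ = 2/I^2 := by ring
    rw [e1, e2, div_le_div_iff₀ (by positivity) hI2pos]
    clear_value I q
    have s1 : 4*A*I^2 ≤ 4*A*(Real.pi^2*q^2/2) :=
      mul_le_mul_of_nonneg_left hI2 (by positivity)
    have s2 : 4*A*(Real.pi^2*q^2/2) = 2*Real.pi^2*(A*q^2) := by ring
    have s3 : 2*Real.pi^2*(A*q^2) ≤ 2*Real.pi^2*B :=
      mul_le_mul_of_nonneg_left key2 (by positivity)
    linarith
end
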